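/- arXiv:1911.09671 — 4 statements merged into one kernel-verified Lean document; each statement's English description precedes it below -/
import Mathlib

section
/- If a read operation observes two failures of wLL (or one failed SC and one failed wLL), and each failure implies a successful SC occurred during the corresponding attempt interval, and no two successful resetting SCs can occur without a value-installing SC in between, then at least one value-installing SC (from line swcopy-sc1 or write-sc) occurred during the read's execution interval. -/
/-- Model an execution interval as the list `l` of labels of its successful SC
events (`true` = installing, from swcopy-sc1/write-sc; `false` = resetting,
from read-sc/swcopy-sc2).  The pointer state (`true` = Valid, `false` = Null)
starts at `s0`; a resetting event sets it to Null and an installing event sets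
it to Valid, so the state just before event `i` is `s0` if `i = 0` and the
label of event `i-1` otherwise.  Validity: an installing event occurs only in
state Null and a resetting event only in state Valid.  Then (1) between any two
resetting events there is an installing event, and (2) any interval containing
at least two successful SC events contains an installing event. -/
theorem installing_between_resets (s0 : Bool) (l : List Bool)
    (hvalid : ∀ (i : ℕ) (hi : i < l.length),
      (if h : i = 0 then s0 else l.get ⟨i - 1, by omega⟩) = !(l.get ⟨i, hi⟩)) :
    (∀ (i j : ℕ) (hi : i < l.length) (hj : j < l.length), i < j →
        l.get ⟨i, hi⟩ = false → l.get ⟨j, hj⟩ = false →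
        ∃ (m : ℕ) (hm : m < l.length), i < m ∧ m < j ∧
          l.get ⟨m, hm⟩ = true) ∧
    (2 ≤ l.length → ∃ (m : ℕ) (hm : m < l.length), l.get ⟨m, hm⟩ = true) := by
  have hstep : ∀ (i : ℕ) (h : i + 1 < l.length),
      l.get ⟨i + 1, h⟩ = !(l.get ⟨i, by omega⟩) := by
    intro i h
    have := hvalid (i + 1) h
    simp only [Nat.succ_ne_zero, ↓reduceDIte, Nat.add_sub_cancel] at this
    rw [this, Bool.not_not]
  constructor
  · intro i j hi hj hij hfi hfj
    refine ⟨i + 1, by omega, by omega, ?_, ?_⟩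
    · rcases Nat.lt_or_ge (i + 1) j with h | h
      · exact h
      · exfalso
        have hj1 : i + 1 = j := by omega
        subst hj1
        rw [hstep i hj, hfi] at hfj
        simp at hfj
    · rw [hstep i (by omega), hfi]; rfl
  · intro hlen
    rcases h0 : l.get ⟨0, by omega⟩ with _ | _
    · refine ⟨1, by omega, ?_⟩
      rw [hstep 0 (by omega), h0]; rfl
    · exact ⟨0, by omega, h0⟩
end

section
/- ABA-freedom invariant: if at configuration C a buffer b is pointed to by object X and announced in slot A[i], and b can only be reused (returned to a free list) after being retired and then passing a scan in which A[i] no longer contains b, then as long as A[i] = b continuously, b never enters any free list; consequently, if X.buf = b at two configurations C < C' with A[i] = b throughout, and any two changes to X.buf install distinct buffers not in use, then X.buf = b at all configurations between C and C'. -/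
/-- A configuration of the buffer-recycling system: the pointer `X.buf`, the
announcement cell `A[i]`, and per-process free and retired sets of buffers. -/
structure RecycleState (β π : Type*) where
  xbuf : β
  ann : β
  free : π → Finset β
  retired : π → Finset β

variable {β π : Type*} [DecidableEq β] [DecidableEq π]

/-- One step of the system: a successful SC pops a buffer from a free set,
installs it in `X.buf` and retires the old buffer; a scan moves a set of
buffers from a retired set to a free set, provided none of them is currently
announced; an announcement write changes the announcement cell. -/
def RecycleStep (s s' : RecycleState β π) : Prop :=
  -- successful SC by process p installing `new`
  (∃ (p : π) (new : β), new ∈ s.free p ∧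
      s'.xbuf = new ∧ s'.ann = s.ann ∧
      s'.free = (fun q => if q = p then (s.free p).erase new else s.free q) ∧
      s'.retired = (fun q => if q = p then insert s.xbuf (s.retired q)
                             else s.retired q)) ∨
  -- scan by process p, freeing the unannounced buffers T
  (∃ (p : π) (T : Finset β), T ⊆ s.retired p ∧ s.ann ∉ T ∧
      s'.xbuf = s.xbuf ∧ s'.ann = s.ann ∧
      s'.free = (fun q => if q = p then s.free p ∪ T else s.free q) ∧
      s'.retired = (fun q => if q = p then s.retired p \ T else s.retired q)) ∨
  -- announcement write
  (∃ b : β, s'.xbuf = s.xbuf ∧ s'.ann = b ∧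
      s'.free = s.free ∧ s'.retired = s.retired)

/-- ABA-freedom: consider an interval `s 0, …, s N` of configurations related
by `RecycleStep`, during which the announcement cell constantly holds the
buffer `b`, and initially `X.buf = b` with `b` in no free or retired set
(exclusivity).  Then `b` never enters any free set during the interval, and
consequently `X.buf` cannot change away from `b` and back to `b`: if
`X.buf = b` at two configurations of the interval, then `X.buf = b` at every
configuration in between. -/
theorem aba_freedom (N : ℕ) (b : β) (s : ℕ → RecycleState β π)
    (hstep : ∀ n, n < N → RecycleStep (s n) (s (n + 1)))
    (hann : ∀ n, n ≤ N → (s n).ann = b)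
    (hx0 : (s 0).xbuf = b)
    (hexcl : ∀ p : π, b ∉ (s 0).free p ∧ b ∉ (s 0).retired p) :
    (∀ n, n ≤ N → ∀ p : π, b ∉ (s n).free p) ∧
    (∀ n m l : ℕ, n ≤ l → l ≤ m → m ≤ N →
      (s n).xbuf = b → (s m).xbuf = b → (s l).xbuf = b) := by
  have hfree : ∀ n, n ≤ N → ∀ p : π, b ∉ (s n).free p := by
    intro n
    induction n with
    | zero => intro _ p; exact (hexcl p).1
    | succ k ih =>
      intro hk p
      have hkN : k < N := Nat.lt_of_succ_le hk
      have ihk := ih (Nat.le_of_lt hkN)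
      have hannk := hann k (Nat.le_of_lt hkN)
      rcases hstep k hkN with ⟨q, new, hnew, _, _, hf, _⟩ | ⟨q, T, hT, hTann, _, _, hf, _⟩ | ⟨c, _, _, hf, _⟩
      · rw [hf]
        by_cases hpq : p = q
        · subst hpq; simp only [if_pos rfl]
          exact fun h => ihk p (Finset.mem_of_mem_erase h)
        · simp only [if_neg hpq]; exact ihk p
      · rw [hf]
        by_cases hpq : p = q
        · subst hpq; simp only [if_pos rfl]
          intro hmem
          rcases Finset.mem_union.mp hmem with h | h
          · exact ihk p h
          · rw [hannk] at hTann; exact hTann h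
        · simp only [if_neg hpq]; exact ihk p
      · rw [hf]; exact ihk p
  refine ⟨hfree, ?_⟩
  have hne : ∀ k m, k ≤ m → m ≤ N → (s k).xbuf ≠ b → (s m).xbuf ≠ b := by
    intro k m hkm hmN
    induction m with
    | zero => intro h; simpa [Nat.le_zero.mp hkm] using h
    | succ j ih =>
      intro h
      rcases Nat.lt_or_ge k (j+1) with hlt | hge
      · have hj : (s j).xbuf ≠ b := ih (Nat.le_of_lt_succ hlt) (Nat.le_of_lt hmN) h
        have hjN : j < N := hmN
        rcases hstep j hjN with ⟨q, new, hnew, hx, _, _, _⟩ | ⟨q, T, _, _, hx, _, _, _⟩ | ⟨c, hx, _, _, _⟩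
        · rw [hx]; intro heq; subst heq
          exact hfree j (Nat.le_of_lt hjN) q hnew
        · rw [hx]; exact hj
        · rw [hx]; exact hj
      · have : k = j + 1 := le_antisymm hkm hge
        rw [← this]; exact h
  intro n m l hnl hlm hmN hxn hxm
  by_contra hl
  exact hne l m hlm hmN hl hxm
end

section
/- In a valid ptr-automaton trace where installing events occur only as the first SC of some swcopy interval and resetting events occur only within an active swcopy interval (after its installing event), the swcopy intervals partition the Valid-state periods: ptr is Valid at configuration C if and only if C lies between the installing SC of some swcopy and the matching resetting SC, and these matched pairs are nested within distinct, non-overlapping swcopy intervals. -/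
/-- Swcopy intervals partition the Valid periods of `ptr`.  There are `n`
pairwise-disjoint swcopy intervals `[beg j, fin j]` (one writer); inside
interval `j`, the installing SC occurs at time `inst j` (allowed only in state
Null, setting the state Valid) and the matching resetting SC at time `reset j`
(allowed only in state Valid, setting the state Null), with
`beg j ≤ inst j < reset j ≤ fin j`.  The state `ptr t` (`true` = Valid) starts
Null and changes only at installing/resetting events.  Then `ptr` is Valid at
configuration `t` iff `t` lies in some open-closed interval
`(inst j, reset j]`, and `ptr` is Null at every configuration outside all
swcopy intervals. -/
theorem swcopy_intervals_partition_valid (n : ℕ)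
    (beg fin inst reset : Fin n → ℕ) (ptr : ℕ → Bool)
    (hord : ∀ j, beg j ≤ inst j ∧ inst j < reset j ∧ reset j ≤ fin j)
    (hdisj : ∀ j k, j ≠ k → fin j < beg k ∨ fin k < beg j)
    (hptr0 : ptr 0 = false)
    (hinst_pre : ∀ j, ptr (inst j) = false)
    (hinst_post : ∀ j, ptr (inst j + 1) = true)
    (hreset_pre : ∀ j, ptr (reset j) = true)
    (hreset_post : ∀ j, ptr (reset j + 1) = false)
    (hframe : ∀ t : ℕ, (∀ j, inst j ≠ t ∧ reset j ≠ t) → ptr (t + 1) = ptr t) :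
    ∀ t : ℕ,
      (ptr t = true ↔ ∃ j, inst j < t ∧ t ≤ reset j) ∧
      ((∀ j, t < beg j ∨ fin j < t) → ptr t = false) := by
  have main : ∀ t, ptr t = true ↔ ∃ j, inst j < t ∧ t ≤ reset j := by
    intro t
    induction t with
    | zero =>
      rw [hptr0]; simp only [Bool.false_eq_true, false_iff]
      rintro ⟨j, h1, h2⟩; omega
    | succ t ih =>
      by_cases hi : ∃ j, inst j = t
      · obtain ⟨j, hj⟩ := hi
        have hpost : ptr (t + 1) = true := hj ▸ hinst_post j
        rw [hpost]
        simp only [true_iff]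
        exact ⟨j, by omega, by have := (hord j).2.1; omega⟩
      · by_cases hr : ∃ j, reset j = t
        · obtain ⟨j, hj⟩ := hr
          have hpost : ptr (t + 1) = false := hj ▸ hreset_post j
          rw [hpost]
          simp only [Bool.false_eq_true, false_iff]
          rintro ⟨k, hk1, hk2⟩
          by_cases hkj : k = j
          · subst hkj; omega
          · rcases hdisj k j hkj with h | h
            · have h1 := hord k; have h2 := hord j; omega
            · have h1 := hord k; have h2 := hord j; omega
        · push_neg at hi hr
          rw [hframe t (fun j => ⟨hi j, hr j⟩), ih]
          constructor
          · rintro ⟨j, h1, h2⟩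
            exact ⟨j, by omega, by have := hr j; omega⟩
          · rintro ⟨j, h1, h2⟩
            exact ⟨j, by have := hi j; omega, by have := hr j; omega⟩
  intro t
  refine ⟨main t, fun h => ?_⟩
  by_contra hc
  have ht : ptr t = true := by
    cases hval : ptr t with
    | false => exact absurd hval hc
    | true => rfl
  obtain ⟨j, h1, h2⟩ := (main t).mp ht
  have := hord j
  rcases h j with h' | h' <;> omega
end

section
/- Write operations on a Destination object never fail: if resetting SCs (the only SCs performed by other processes) can succeed only while ptr is Valid, and ptr is Null at all configurations outside swcopy intervals, and a write operation's interval is disjoint from all swcopy intervals (single-writer assumption), then no concurrent SC succeeds during the write, so the write's own wLL/SC pair both succeed. -/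
/-- Write operations on a Destination object never fail.  `ptr t` (`true` =
Valid) is Null at every configuration outside the `n` swcopy intervals
`[beg j, fin j]`.  The only SCs performed by other processes are resetting SCs
(`otherSucc t` marks the times of their successful ones) and these can succeed
only while `ptr` is Valid.  A write operation occupies `[ws, we]`, disjoint
from all swcopy intervals (single writer), and performs its wLL at `t1` and its
SC at `t2` with `ws ≤ t1 ≤ t2 ≤ we`; the SC fails only if another successful SC
occurs between them.  Then no other SC succeeds during the write, so the
write's SC succeeds. -/
theorem write_never_fails (n : ℕ) (beg fin : Fin n → ℕ) (ptr : ℕ → Bool)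
    (otherSucc : ℕ → Prop)
    (hnull : ∀ t : ℕ, (∀ j, t < beg j ∨ fin j < t) → ptr t = false)
    (hreset : ∀ t : ℕ, otherSucc t → ptr t = true)
    (ws we t1 t2 : ℕ)
    (hdisj : ∀ j, we < beg j ∨ fin j < ws)
    (hw : ws ≤ t1 ∧ t1 ≤ t2 ∧ t2 ≤ we)
    (scFail : Prop)
    (hfail : scFail ↔ ∃ t : ℕ, otherSucc t ∧ t1 ≤ t ∧ t ≤ t2) :
    (∀ t : ℕ, ws ≤ t → t ≤ we → ¬ otherSucc t) ∧ ¬ scFail := by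
  have key : ∀ t : ℕ, ws ≤ t → t ≤ we → ¬ otherSucc t := by
    intro t h1 h2 ho
    have := hreset t ho
    have hn := hnull t (fun j => by rcases hdisj j with h|h <;> omega)
    simp [hn] at this
  refine ⟨key, fun hs => ?_⟩
  obtain ⟨t, ho, h1, h2⟩ := hfail.mp hs
  exact key t (by omega) (by omega) ho
end
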